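/- Let P be a Borel probability measure on ℝ^n, let T : ℝ^n → (ℝ^D)^Q be Borel measurable with coordinate maps T^q : ℝ^n → ℝ^D, let e : Fin K → ℝ^D be a codebook, and for each q = 1, …, Q let π^q be a probability vector on Fin K, with P_{e,π^q} = ∑_k π^q_k δ_{e k}. With f_dz(z, z') = (1/Q) ∑_q ‖z^q − z'^q‖ on (ℝ^D)^Q, the infimum, over all Borel probability measures γ on (ℝ^D)^Q that are supported on codeword tuples {e k : k ∈ Fin K}^Q and whose q-th coordinate marginal equals P_{e,π^q} for every q, of W_{f_dz}(T#P, γ), is at most (1/Q) ∑_{q=1}^{Q} W_{dist}(T^q#P, P_{e,π^q}), where dist is the Euclidean distance on ℝ^D. -/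

import Mathlib

open MeasureTheory ProbabilityTheory ENNReal

/-- Kantorovich cost `W_c(μ, ν)`: the infimum of `∫ c(x, y) dπ(x, y)` over all
probability measures `π` on the product whose first marginal is `μ` and whose
second marginal is `ν`. -/
noncomputable def Wcost {X Y : Type*} [MeasurableSpace X] [MeasurableSpace Y]
    (c : X → Y → ℝ≥0∞) (μ : Measure X) (ν : Measure Y) : ℝ≥0∞ :=
  ⨅ (π : Measure (X × Y)) (_ : IsProbabilityMeasure π)
    (_ : π.fst = μ) (_ : π.snd = ν), ∫⁻ p, c p.1 p.2 ∂π

/-- The discrete codebook measure `P_{e,π} = ∑ k, π k • δ_{e k}` on `ℝ^D`. -/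
noncomputable def codebookMeasure {K D : ℕ} (e : Fin K → EuclideanSpace ℝ (Fin D))
    (w : Fin K → ℝ) : Measure (EuclideanSpace ℝ (Fin D)) :=
  ∑ k, (ENNReal.ofReal (w k)) • Measure.dirac (e k)

/-- The latent cost `f_dz(z, z') = (1/Q) ∑ q, ‖z q − z' q‖` on `(ℝ^D)^Q`,
valued in `ℝ≥0∞`. -/
noncomputable def fdz {Q D : ℕ} (z z' : Fin Q → EuclideanSpace ℝ (Fin D)) : ℝ≥0∞ :=
  (∑ q, ENNReal.ofReal ‖z q - z' q‖) / (Q : ℝ≥0∞)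

/-!
Pick couplings `ρ_q` of `T^q#P` and `P_{e,π^q}`, disintegrate `ρ_q = T^q#P ⊗ κ_q`, and couple
`z ~ T#P` with the tuple whose `q`-th coordinate is drawn from `κ_q(z^q)`, independently over `q`.
Each coordinate pair of this coupling is distributed as `ρ_q`, so its second marginal has the
prescribed codebook marginals (hence lives on codeword tuples) and its `f_dz`-cost is the average
of the costs of the `ρ_q`. Taking the `ρ_q` near-optimal gives the bound.
-/

open Set Filter Topology

namespace ENNReal

theorem le_sum_iInf {ι : Type*} [Fintype ι] {α : ι → Type*} {F : ℝ≥0∞}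
    {f : ∀ i, α i → ℝ≥0∞} (h : ∀ a : ∀ i, α i, F ≤ ∑ i, f i (a i)) :
    F ≤ ∑ i, ⨅ b, f i b := by
  by_cases hne : ∀ i, Nonempty (α i)
  · have hseq : ∀ i, ∃ u : ℕ → α i, Tendsto (fun n => f i (u n)) atTop (𝓝 (⨅ b, f i b)) := by
      intro i
      obtain ⟨v, -, hv, hvS⟩ := exists_seq_tendsto_sInf (range_nonempty (f i)) (OrderBot.bddBelow _)
      choose u hu using hvS
      exact ⟨u, by simpa only [hu, sInf_range] using hv⟩
    choose u hu using hseq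
    exact ge_of_tendsto (tendsto_finsetSum _ fun i _ => hu i)
      (Eventually.of_forall fun n => h fun i => u i n)
  · obtain ⟨i, hi⟩ := not_forall.1 hne
    rw [not_nonempty_iff] at hi
    rw [sum_eq_top.2 ⟨i, Finset.mem_univ i, iInf_of_empty _⟩]
    exact le_top

end ENNReal

namespace ProbabilityTheory.Kernel

variable {α ι : Type*} [Fintype ι] {X : ι → Type*} [MeasurableSpace α]
  [∀ i, MeasurableSpace (X i)]

noncomputable def pi (κ : ∀ i, Kernel α (X i)) [∀ i, IsMarkovKernel (κ i)] :
    Kernel α (∀ i, X i) where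
  toFun a := Measure.pi fun i => κ i a
  measurable' := by
    refine .measure_of_isPiSystem_of_isProbabilityMeasure generateFrom_pi.symm isPiSystem_pi ?_
    rintro _ ⟨s, hs, rfl⟩
    simp_rw [Measure.pi_pi]
    exact Finset.measurable_prod _ fun i _ => (κ i).measurable_coe (hs i (mem_univ i))

variable (κ : ∀ i, Kernel α (X i)) [∀ i, IsMarkovKernel (κ i)]

theorem pi_apply (a : α) : pi κ a = Measure.pi fun i => κ i a := rfl

instance : IsMarkovKernel (pi κ) := ⟨fun a => by rw [pi_apply]; infer_instance⟩

theorem map_pi_eval (i : ι) : (pi κ).map (fun x => x i) = κ i := by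
  classical
  ext a : 1
  rw [map_apply _ (measurable_pi_apply i), pi_apply]
  exact (Measure.pi_map_eval _ i).trans (by simp)

end ProbabilityTheory.Kernel

namespace MeasureTheory.Measure

section

variable {α β γ : Type*} [MeasurableSpace α] [MeasurableSpace β] [MeasurableSpace γ]

theorem map_prodMap_compProd_comap (μ : Measure α) [SFinite μ] (κ : Kernel β γ)
    [IsSFiniteKernel κ] {f : α → β} (hf : Measurable f) :
    (μ ⊗ₘ κ.comap f hf).map (Prod.map f id) = μ.map f ⊗ₘ κ := by
  ext s hs
  rw [map_apply (hf.prodMap measurable_id) hs, compProd_apply (hf.prodMap measurable_id hs),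
    compProd_apply hs, lintegral_map (Kernel.measurable_kernel_prodMk_left hs) hf]
  rfl

end

section Gluing

variable {ι : Type*} [Fintype ι] {X Y : ι → Type*} [∀ i, MeasurableSpace (X i)]
  [∀ i, MeasurableSpace (Y i)] [∀ i, StandardBorelSpace (Y i)] [∀ i, Nonempty (Y i)]

theorem exists_map_coord_eq_of_fst_eq (μ : Measure (∀ i, X i)) [IsProbabilityMeasure μ]
    (π : ∀ i, Measure (X i × Y i)) [∀ i, IsFiniteMeasure (π i)]
    (hπ : ∀ i, (π i).fst = μ.map (fun x => x i)) :
    ∃ Γ : Measure ((∀ i, X i) × ∀ i, Y i), IsProbabilityMeasure Γ ∧ Γ.fst = μ ∧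
      ∀ i, Γ.map (fun p => (p.1 i, p.2 i)) = π i := by
  let κ : Kernel (∀ i, X i) (∀ i, Y i) :=
    Kernel.pi fun i => (π i).condKernel.comap (fun x => x i) (measurable_pi_apply i)
  refine ⟨μ ⊗ₘ κ, inferInstance, fst_compProd μ κ, fun i => ?_⟩
  calc (μ ⊗ₘ κ).map (fun p => (p.1 i, p.2 i))
      = ((μ ⊗ₘ κ).map (Prod.map id fun y => y i)).map (Prod.map (fun x => x i) id) := by
        rw [map_map (by fun_prop) (by fun_prop)]
        rfl
    _ = (μ ⊗ₘ κ.map fun y => y i).map (Prod.map (fun x => x i) id) := by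
        rw [compProd_map (measurable_pi_apply i)]
    _ = (π i).fst ⊗ₘ (π i).condKernel := by
        rw [Kernel.map_pi_eval, map_prodMap_compProd_comap, hπ]
    _ = π i := (π i).disintegrate _

end Gluing

end MeasureTheory.Measure

abbrev Couplings {X Y : Type*} [MeasurableSpace X] [MeasurableSpace Y] (μ : Measure X)
    (ν : Measure Y) : Type _ :=
  {π : Measure (X × Y) // IsProbabilityMeasure π ∧ π.fst = μ ∧ π.snd = ν}

theorem Wcost_le_lintegral {X Y : Type*} [MeasurableSpace X] [MeasurableSpace Y]
    (c : X → Y → ℝ≥0∞) {μ : Measure X} {ν : Measure Y} (π : Measure (X × Y))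
    [hπ : IsProbabilityMeasure π] (hfst : π.fst = μ) (hsnd : π.snd = ν) :
    Wcost c μ ν ≤ ∫⁻ p, c p.1 p.2 ∂π :=
  iInf_le_of_le π <| iInf_le_of_le hπ <| iInf_le_of_le hfst <| iInf_le _ hsnd

theorem Wcost_eq_iInf_couplings {X Y : Type*} [MeasurableSpace X] [MeasurableSpace Y]
    (c : X → Y → ℝ≥0∞) (μ : Measure X) (ν : Measure Y) :
    Wcost c μ ν = ⨅ π : Couplings μ ν, ∫⁻ p, c p.1 p.2 ∂π.1 := by
  simp only [Wcost, iInf_subtype, iInf_and]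

theorem ae_exists_eq_codebookMeasure {K D : ℕ} (e : Fin K → EuclideanSpace ℝ (Fin D))
    (w : Fin K → ℝ) : ∀ᵐ y ∂codebookMeasure e w, ∃ k, y = e k := by
  simp [codebookMeasure, ae_iff]

theorem fdz_eq_sum_edist {Q D : ℕ} (z z' : Fin Q → EuclideanSpace ℝ (Fin D)) :
    fdz z z' = (∑ q, edist (z q) (z' q)) / Q := by
  simp only [fdz, edist_dist, dist_eq_norm]

theorem iInf_Wcost_fdz_le {K Q D : ℕ} (μ : Measure (Fin Q → EuclideanSpace ℝ (Fin D)))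
    [IsProbabilityMeasure μ] (e : Fin K → EuclideanSpace ℝ (Fin D)) (w : Fin Q → Fin K → ℝ)
    (π : Fin Q → Measure (EuclideanSpace ℝ (Fin D) × EuclideanSpace ℝ (Fin D)))
    [∀ q, IsProbabilityMeasure (π q)] (hfst : ∀ q, (π q).fst = μ.map (fun z => z q))
    (hsnd : ∀ q, (π q).snd = codebookMeasure e (w q)) :
    (⨅ (γ : Measure (Fin Q → EuclideanSpace ℝ (Fin D)))
       (_ : IsProbabilityMeasure γ)
       (_ : γ {z | ∀ q, ∃ k, z q = e k} = 1)
       (_ : ∀ q, γ.map (fun z => z q) = codebookMeasure e (w q)),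
       Wcost fdz μ γ)
    ≤ (∑ q, ∫⁻ p, edist p.1 p.2 ∂(π q)) / Q := by
  obtain ⟨Γ, hΓ, hΓfst, hΓπ⟩ := Measure.exists_map_coord_eq_of_fst_eq μ π hfst
  have hmarg : ∀ q, Γ.snd.map (fun z => z q) = codebookMeasure e (w q) := fun q => by
    rw [← hsnd q, ← hΓπ q, Measure.snd, Measure.snd, Measure.map_map (by fun_prop) (by fun_prop),
      Measure.map_map (by fun_prop) (by fun_prop)]
    rfl
  have hsupp : Γ.snd {z | ∀ q, ∃ k, z q = e k} = 1 := by
    rw [← mem_ae_iff_prob_eq_one (by measurability)]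
    refine ae_all_iff.2 fun q => ?_
    have h := ae_exists_eq_codebookMeasure e (w q)
    rw [← hmarg q] at h
    exact ae_of_ae_map (f := fun z : Fin Q → EuclideanSpace ℝ (Fin D) => z q)
      (measurable_pi_apply q).aemeasurable h
  have hcost : ∫⁻ p, fdz p.1 p.2 ∂Γ = (∑ q, ∫⁻ p, edist p.1 p.2 ∂(π q)) / Q := by
    simp_rw [fdz_eq_sum_edist, ENNReal.div_eq_inv_mul]
    rw [lintegral_const_mul _ (by fun_prop), lintegral_finsetSum _ fun q _ => by fun_prop]
    congr 1
    refine Finset.sum_congr rfl fun q _ => ?_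
    rw [← hΓπ q, lintegral_map (by fun_prop) (by fun_prop)]
  calc _ ≤ Wcost fdz μ Γ.snd :=
        iInf_le_of_le Γ.snd <| iInf_le_of_le Measure.snd.instIsProbabilityMeasure <|
          iInf_le_of_le hsupp <| iInf_le _ hmarg
    _ ≤ ∫⁻ p, fdz p.1 p.2 ∂Γ := Wcost_le_lintegral fdz Γ hΓfst rfl
    _ = _ := hcost

theorem stmt6_general {K Q D n : ℕ}
    (P : Measure (EuclideanSpace ℝ (Fin n))) [IsProbabilityMeasure P]
    (T : EuclideanSpace ℝ (Fin n) → (Fin Q → EuclideanSpace ℝ (Fin D)))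
    (hT : Measurable T)
    (e : Fin K → EuclideanSpace ℝ (Fin D)) (w : Fin Q → Fin K → ℝ) :
    (⨅ (γ : Measure (Fin Q → EuclideanSpace ℝ (Fin D)))
       (_ : IsProbabilityMeasure γ)
       (_ : γ {z | ∀ q, ∃ k, z q = e k} = 1)
       (_ : ∀ q, γ.map (fun z => z q) = codebookMeasure e (w q)),
       Wcost fdz (P.map T) γ)
    ≤ (∑ q, Wcost (fun a b => edist a b)
          (P.map (fun x => T x q)) (codebookMeasure e (w q))) / (Q : ℝ≥0∞) := by
  have := Measure.isProbabilityMeasure_map (μ := P) hT.aemeasurable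
  have hQ : ∀ q : Fin Q, (Q : ℝ≥0∞)⁻¹ ≠ 0 ∧ (Q : ℝ≥0∞)⁻¹ ≠ ∞ := fun q =>
    ⟨ENNReal.inv_ne_zero.2 (ENNReal.natCast_ne_top Q), ENNReal.inv_ne_top.2 (by simp [q.pos.ne'])⟩
  calc _ ≤ ∑ q, ⨅ π : Couplings (P.map (fun x => T x q)) (codebookMeasure e (w q)),
          (∫⁻ p, edist p.1 p.2 ∂π.1) * (Q : ℝ≥0∞)⁻¹ :=
        ENNReal.le_sum_iInf fun π => by
          have := fun q => (π q).2.1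
          have hfst : ∀ q, (π q).1.fst = (P.map T).map (fun z => z q) := fun q => by
            rw [(π q).2.2.1, Measure.map_map (measurable_pi_apply q) hT]
            rfl
          simpa only [div_eq_mul_inv, Finset.sum_mul] using
            iInf_Wcost_fdz_le (P.map T) e w (fun q => π q) hfst fun q => (π q).2.2.2
    _ = ∑ q, Wcost (fun a b => edist a b) (P.map (fun x => T x q)) (codebookMeasure e (w q)) *
          (Q : ℝ≥0∞)⁻¹ := Finset.sum_congr rfl fun q _ => by
        rw [Wcost_eq_iInf_couplings, ENNReal.iInf_mul_of_ne (hQ q).1 (hQ q).2]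
    _ = _ := by rw [div_eq_mul_inv, Finset.sum_mul]

/-- **Lemma 2 of the paper**: the infimum, over probability measures `γ` on `(ℝ^D)^Q`
supported on codeword tuples and with `q`-th coordinate marginal `P_{e,π^q}` for every
`q`, of `W_{f_dz}(T#P, γ)`, is at most the average `(1/Q) ∑ q, W_dist(T^q#P, P_{e,π^q})`
of the per-coordinate marginal Wasserstein distances (Euclidean distance cost). -/
theorem stmt6 {K Q D n : ℕ}
    (P : Measure (EuclideanSpace ℝ (Fin n))) [IsProbabilityMeasure P]
    (T : EuclideanSpace ℝ (Fin n) → (Fin Q → EuclideanSpace ℝ (Fin D)))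
    (hT : Measurable T)
    (e : Fin K → EuclideanSpace ℝ (Fin D)) (w : Fin Q → Fin K → ℝ)
    (hw0 : ∀ q k, 0 ≤ w q k) (hw1 : ∀ q, ∑ k, w q k = 1) :
    (⨅ (γ : Measure (Fin Q → EuclideanSpace ℝ (Fin D)))
       (_ : IsProbabilityMeasure γ)
       (_ : γ {z | ∀ q, ∃ k, z q = e k} = 1)
       (_ : ∀ q, γ.map (fun z => z q) = codebookMeasure e (w q)),
       Wcost fdz (P.map T) γ)
    ≤ (∑ q, Wcost (fun a b => edist a b)
          (P.map (fun x => T x q)) (codebookMeasure e (w q))) / (Q : ℝ≥0∞) :=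
  stmt6_general P T hT e w
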